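/- arXiv:2410.11775 — 2 statements merged into one kernel-verified Lean document; each statement's English description precedes it below -/
import Mathlib

section
/- Let T = (T_n : n ∈ ℕ⁺) be a sequence of trees satisfying the Assumption on the base sequence of trees. Let T' be any tree of height at least 1. Then for all sufficiently large n the following holds: for every a ∈ T_n, if N_{T_n}(a, T') > 0 then N_{T_n}(a, T') ≥ g₁(n). -/
open Classical Filter
noncomputable section

namespace PaperTrees

/-! ### Trees -/

section Trees
variable {A : Type*} {B : Type*}

/-- Level `l` of an edge relation: level 0 = elements with no incoming edge (roots),
level `l+1` = children of level-`l` elements. -/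
def Level (E : A → A → Prop) : ℕ → A → Prop
  | 0 => fun a => ∀ x, ¬ E x a
  | (l+1) => fun a => ∃ b, Level E l b ∧ E b a

def IsRoot (E : A → A → Prop) (a : A) : Prop := ∀ x, ¬ E x a

def IsLeaf (E : A → A → Prop) (a : A) : Prop := ∀ x, ¬ E a x

/-- A tree: `E b a` means `b` is the parent of `a`. -/
structure IsTree (E : A → A → Prop) : Prop where
  asymm : ∀ a b, E a b → a ≠ b ∧ ¬ E b a
  root_unique : ∃! r, IsRoot E r
  parent_unique : ∀ a, ¬ IsRoot E a → ∃! b, E b a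
  acyclic : ∀ a, ¬ Relation.TransGen E a a

def HeightLe (E : A → A → Prop) (h : ℕ) : Prop := ∀ l a, Level E l a → l ≤ h

def HasHeight (E : A → A → Prop) (h : ℕ) : Prop := (∃ a, Level E h a) ∧ HeightLe E h

/-- `a` is an ancestor of `b`: there is a directed path from `a` to `b`. -/
def Ancestor (E : A → A → Prop) (a b : A) : Prop := Relation.TransGen E a b

/-- The closure of a set in a tree: the set together with the root and all
ancestors of its members. -/
def treeCl (E : A → A → Prop) (S : Set A) : Set A :=
  {a | a ∈ S ∨ IsRoot E a ∨ ∃ b ∈ S, Ancestor E a b}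

def IsClosedSet (E : A → A → Prop) (S : Set A) : Prop := treeCl E S = S

def Sibling (E : A → A → Prop) (a b : A) : Prop := a ≠ b ∧ ∃ c, E c a ∧ E c b

def childSet (E : A → A → Prop) (a : A) : Set A := {x | E a x}

/-- The relation induced on a subset (induced substructure). -/
def InducedRel (E : A → A → Prop) (S : Set A) : S → S → Prop := fun x y => E x y

/-- Isomorphism of binary relational structures. -/
def RelIso' (E : A → A → Prop) (E' : B → B → Prop) : Prop :=
  ∃ f : A ≃ B, ∀ x y, E x y ↔ E' (f x) (f y)

/-- `S` carries a subtree of `(A,E)` rooted at `a`. -/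
def IsSubtreeRootedAt (E : A → A → Prop) (S : Set A) (a : A) : Prop :=
  (∃ h : a ∈ S, IsRoot (InducedRel E S) ⟨a, h⟩) ∧ IsTree (InducedRel E S)

/-- `NT E E' a`: the number of subtrees of `(A,E)` rooted at `a` and isomorphic to `(B,E')`. -/
def NT (E : A → A → Prop) (E' : B → B → Prop) (a : A) : ℕ :=
  Set.ncard {S : Set A | IsSubtreeRootedAt E S a ∧ RelIso' (InducedRel E S) E'}

end Trees

/-! ### PLA*: syntax and semantics -/

/-- A (finite) σ-structure on domain `A`: a Bool-valued interpretation of every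
relation symbol. -/
abbrev Struc (σ : Type) (ar : σ → ℕ) (A : Type) : Type := ∀ R : σ, (Fin (ar R) → A) → Bool

/-- Formulas of `PLA*(σ)` with variables in `ℕ`.  Connectives are continuous
functions `[0,1]^k → [0,1]`; aggregation functions are functions
`([0,1]^{<ω})^k → [0,1]` invariant under reordering of the entries of each
sequence; an aggregation node binds the (distinct) variables of `ys`. -/
inductive PLA (σ : Type) (ar : σ → ℕ) : Type where
  | const : unitInterval → PLA σ ar
  | eqf : ℕ → ℕ → PLA σ ar
  | rel : (R : σ) → (Fin (ar R) → ℕ) → PLA σ ar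
  | conn : (k : ℕ) → (C : (Fin k → unitInterval) → unitInterval) → Continuous C →
      (Fin k → PLA σ ar) → PLA σ ar
  | agg : (k : ℕ) → (F : (Fin k → List unitInterval) → unitInterval) →
      (∀ p q : Fin k → List unitInterval, (∀ i, List.Perm (p i) (q i)) → F p = F q) →
      (ys : List ℕ) → ys.Nodup → (Fin k → PLA σ ar) → (Fin k → PLA σ ar) → PLA σ ar

/-- Update an assignment on the variables of the list `ys` by the tuple `b`. -/
def updMany {A : Type} (β : ℕ → A) (ys : List ℕ) (b : Fin ys.length → A) : ℕ → A :=
  fun v => if h : v ∈ ys then b ⟨ys.idxOf v, List.idxOf_lt_length_iff.mpr h⟩ else β v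

/-- The value `A(φ(ā)) ∈ [0,1]` of a `PLA*`-formula in a finite structure under an
assignment. -/
def eval {σ : Type} {ar : σ → ℕ} {A : Type} [Fintype A] (S : Struc σ ar A) :
    PLA σ ar → (ℕ → A) → unitInterval
  | .const c, _ => c
  | .eqf u v, β => if β u = β v then 1 else 0
  | .rel R t, β => if S R (fun i => β (t i)) then 1 else 0
  | .conn _ C _ f, β => C fun i => eval S (f i) β
  | .agg k F _ ys _ φs χs, β =>
      let L : List (Fin ys.length → A) := (Finset.univ : Finset (Fin ys.length → A)).toList
      let vals : Fin k → List unitInterval := fun i =>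
        (L.filter fun b => decide (eval S (χs i) (updMany β ys b) = 1)).map
          fun b => eval S (φs i) (updMany β ys b)
      if ∀ i, vals i ≠ [] then F vals else 0

/-- Free variables (aggregation binds the variables of `ys`). -/
def freeVars {σ : Type} {ar : σ → ℕ} : PLA σ ar → Set ℕ
  | .const _ => ∅
  | .eqf u v => {u, v}
  | .rel _ t => Set.range t
  | .conn _ _ _ f => ⋃ i, freeVars (f i)
  | .agg _ _ _ ys _ φs χs =>
      (((⋃ i, freeVars (φs i)) ∪ ⋃ i, freeVars (χs i)) \ {v | v ∈ ys})

/-- The relation symbols occurring in a formula. -/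
def symbols {σ : Type} {ar : σ → ℕ} : PLA σ ar → Set σ
  | .const _ => ∅
  | .eqf _ _ => ∅
  | .rel R _ => {R}
  | .conn _ _ _ f => ⋃ i, symbols (f i)
  | .agg _ _ _ _ _ φs χs => (⋃ i, symbols (φs i)) ∪ ⋃ i, symbols (χs i)

/-- No aggregation function occurs in the formula. -/
def AggFree {σ : Type} {ar : σ → ℕ} : PLA σ ar → Prop
  | .const _ => True
  | .eqf _ _ => True
  | .rel _ _ => True
  | .conn _ _ _ f => ∀ i, AggFree (f i)
  | .agg _ _ _ _ _ _ _ => False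

/-- `AggOK P φ` holds iff every aggregation subformula
`F(φ₁,…,φ_k : z̄ : χ₁,…,χ_k)` of `φ` satisfies `P k F (χ₁,…,χ_k) z̄`. -/
def AggOK {σ : Type} {ar : σ → ℕ}
    (P : ∀ k : ℕ, ((Fin k → List unitInterval) → unitInterval) → (Fin k → PLA σ ar) → List ℕ → Prop) :
    PLA σ ar → Prop
  | .const _ => True
  | .eqf _ _ => True
  | .rel _ _ => True
  | .conn _ _ _ f => ∀ i, AggOK P (f i)
  | .agg k F _ ys _ φs χs => P k F χs ys ∧ (∀ i, AggOK P (φs i)) ∧ ∀ i, AggOK P (χs i)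

section Signature

variable {σ : Type} {ar : σ → ℕ}

/-- `S` interprets the symbol `e` exactly as the binary relation `E0`. -/
def IsExpansionOf (e : σ) (hE : ar e = 2) {A : Type} (E0 : A → A → Prop) (S : Struc σ ar A) : Prop :=
  ∀ t : Fin (ar e) → A, S e t = true ↔ E0 (t (Fin.cast hE.symm 0)) (t (Fin.cast hE.symm 1))

/-- `S` expands some tree of height at most `Δ`. -/
def ExpandsTreeLe (e : σ) (hE : ar e = 2) (Δ : ℕ) {A : Type} (S : Struc σ ar A) : Prop :=
  ∃ E0 : A → A → Prop, IsTree E0 ∧ HeightLe E0 Δ ∧ IsExpansionOf e hE E0 S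

/-- The canonical expansion of a tree interpreting every other relation symbol as empty;
used to express satisfaction of τ-formulas in the tree itself. -/
def tauStruc [DecidableEq σ] (e : σ) (hE : ar e = 2) {A : Type} (E0 : A → A → Prop) :
    Struc σ ar A :=
  fun R t =>
    if h : R = e then
      decide (E0 (t (Fin.cast (show (2:ℕ) = ar R by rw [h, hE]) 0))
        (t (Fin.cast (show (2:ℕ) = ar R by rw [h, hE]) 1)))
    else false

/-! ### Atomic types and closure types -/

/-- Data of a conjunction of σ-literals in `n` variables: the literals asserted
positively and those asserted negatively. -/
structure AtomicTypeData (σ : Type) (ar : σ → ℕ) (n : ℕ) : Type where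
  pos : Set ((R : σ) × (Fin (ar R) → Fin n))
  neg : Set ((R : σ) × (Fin (ar R) → Fin n))

/-- Satisfaction of an atomic type (which includes the inequalities `xᵢ ≠ xⱼ`). -/
def satAtomic {n : ℕ} {A : Type} (S : Struc σ ar A) (φ : AtomicTypeData σ ar n)
    (t : Fin n → A) : Prop :=
  (∀ l ∈ φ.pos, S l.1 (fun i => t (l.2 i)) = true) ∧
  (∀ l ∈ φ.neg, S l.1 (fun i => t (l.2 i)) = false) ∧ Function.Injective t

/-- The `E`-literal on the pair of variables `(i, j)`. -/
def pairTup (e : σ) {n : ℕ} (i j : Fin n) : Fin (ar e) → Fin n :=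
  fun s => if (s : ℕ) = 0 then i else j

/-- An atomic type over σ (with respect to trees of height at most Δ): it decides all
`E`-literals, contains all inequalities (built into `satAtomic`), and is satisfiable in
some expansion of some tree of height at most `Δ`. -/
def IsAtomicType (e : σ) (hE : ar e = 2) (Δ : ℕ) {n : ℕ} (φ : AtomicTypeData σ ar n) : Prop :=
  (∀ i j : Fin n, (⟨e, pairTup e i j⟩ ∈ φ.pos ∨ ⟨e, pairTup e i j⟩ ∈ φ.neg)) ∧
  ∃ (A : Type) (_ : Fintype A) (S : Struc σ ar A) (t : Fin n → A),
    ExpandsTreeLe e hE Δ S ∧ satAtomic S φ t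

/-- A complete atomic type decides every literal. -/
def CompleteAtomic {n : ℕ} (φ : AtomicTypeData σ ar n) : Prop :=
  ∀ (R : σ) (v : Fin (ar R) → Fin n), ⟨R, v⟩ ∈ φ.pos ∨ ⟨R, v⟩ ∈ φ.neg

/-- An atomic type over τ = {E} uses only `E`-literals. -/
def TauAtomic (e : σ) {n : ℕ} (φ : AtomicTypeData σ ar n) : Prop :=
  (∀ l ∈ φ.pos, l.1 = e) ∧ ∀ l ∈ φ.neg, l.1 = e

/-- The tuple of values of an assignment on a list of variables. -/
def xtuple {A : Type} (β : ℕ → A) (xs : List ℕ) : Fin xs.length → A := fun i => β (xs.get i)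

/-- `p` (a 0/1-valued formula with free variables among `xs`) is, on all σ-structures
expanding trees of height at most `Δ`, equivalent to
`∃ w̄ (φ(x̄,w̄) ∧ "x̄w̄ is closed")` where `φ` is an atomic type implying that each `wᵢ`
lies in the closure of `x̄`. -/
def IsClosureTypeData (e : σ) (hE : ar e = 2) (Δ : ℕ) (p : PLA σ ar) (xs : List ℕ)
    (m : ℕ) (φ : AtomicTypeData σ ar (xs.length + m)) : Prop :=
  IsAtomicType e hE Δ φ ∧
  (∀ (A : Type) (_ : Fintype A) (S : Struc σ ar A) (E0 : A → A → Prop),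
     IsTree E0 → HeightLe E0 Δ → IsExpansionOf e hE E0 S →
     ∀ t : Fin (xs.length + m) → A, satAtomic S φ t →
       ∀ i : Fin m, t (Fin.natAdd xs.length i) ∈
         treeCl E0 (Set.range fun j : Fin xs.length => t (Fin.castAdd m j))) ∧
  (∀ (A : Type) (_ : Fintype A) (S : Struc σ ar A) (E0 : A → A → Prop),
     IsTree E0 → HeightLe E0 Δ → IsExpansionOf e hE E0 S →
     ∀ β : ℕ → A,
       (eval S p β = 1 ∨ eval S p β = 0) ∧
       (eval S p β = 1 ↔ ∃ w : Fin m → A,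
          satAtomic S φ (Fin.append (xtuple β xs) w) ∧
          IsClosedSet E0 (Set.range (Fin.append (xtuple β xs) w))))

/-- A closure type over σ, in the (distinct) free variables `xs`. -/
def IsClosureType (e : σ) (hE : ar e = 2) (Δ : ℕ) (p : PLA σ ar) (xs : List ℕ) : Prop :=
  xs.Nodup ∧ freeVars p ⊆ {v | v ∈ xs} ∧
  ∃ (m : ℕ) (φ : AtomicTypeData σ ar (xs.length + m)), IsClosureTypeData e hE Δ p xs m φ

/-- A complete closure type over σ. -/
def IsCompleteClosureType (e : σ) (hE : ar e = 2) (Δ : ℕ) (p : PLA σ ar) (xs : List ℕ) : Prop :=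
  xs.Nodup ∧ freeVars p ⊆ {v | v ∈ xs} ∧
  ∃ (m : ℕ) (φ : AtomicTypeData σ ar (xs.length + m)),
    IsClosureTypeData e hE Δ p xs m φ ∧ CompleteAtomic φ

/-- A closure type over τ = {E}. -/
def IsClosureTypeTau (e : σ) (hE : ar e = 2) (Δ : ℕ) (p : PLA σ ar) (xs : List ℕ) : Prop :=
  xs.Nodup ∧ freeVars p ⊆ {v | v ∈ xs} ∧ symbols p ⊆ {e} ∧
  ∃ (m : ℕ) (φ : AtomicTypeData σ ar (xs.length + m)),
    IsClosureTypeData e hE Δ p xs m φ ∧ TauAtomic e φ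

/-- Semantic implication on finite σ-structures expanding trees of height at most `Δ`. -/
def ImpOnTrees (e : σ) (hE : ar e = 2) (Δ : ℕ) (p q : PLA σ ar) : Prop :=
  ∀ (A : Type) (_ : Fintype A) (S : Struc σ ar A), ExpandsTreeLe e hE Δ S →
    ∀ β : ℕ → A, eval S p β = 1 → eval S q β = 1

/-- `q` is (up to equivalence) the restriction `p↾τ` of the closure type `p` to τ. -/
def IsTauRestriction (e : σ) (hE : ar e = 2) (Δ : ℕ) (p q : PLA σ ar) (xs : List ℕ) : Prop :=
  IsClosureTypeTau e hE Δ q xs ∧ ImpOnTrees e hE Δ p q ∧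
  ∀ q', IsClosureTypeTau e hE Δ q' xs → ImpOnTrees e hE Δ p q' → ImpOnTrees e hE Δ q q'

/-- The ȳ-rank of the closure type `p(x̄,ȳ)` is `r`: on any realization of `p↾τ` in a tree,
`|cl(b̄) ∖ cl(ā)| = r`. -/
def HasRank (e : σ) (hE : ar e = 2) (Δ : ℕ) (p : PLA σ ar) (xs ys : List ℕ) (r : ℕ) : Prop :=
  ∃ q, IsTauRestriction e hE Δ p q (xs ++ ys) ∧
    ∀ (A : Type) (_ : Fintype A) (S : Struc σ ar A) (E0 : A → A → Prop),
      IsTree E0 → HeightLe E0 Δ → IsExpansionOf e hE E0 S →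
      ∀ β : ℕ → A, eval S q β = 1 →
        (treeCl E0 (β '' {v | v ∈ ys}) \ treeCl E0 (β '' {v | v ∈ xs})).ncard = r

/-- Self-contained closure type: it implies that its variables form a closed set. -/
def SelfContained (e : σ) (hE : ar e = 2) (Δ : ℕ) (p : PLA σ ar) (xs : List ℕ) : Prop :=
  ∀ (A : Type) (_ : Fintype A) (S : Struc σ ar A) (E0 : A → A → Prop),
    IsTree E0 → HeightLe E0 Δ → IsExpansionOf e hE E0 S →
    ∀ β : ℕ → A, eval S p β = 1 → IsClosedSet E0 (β '' {v | v ∈ xs})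

/-- `ψ` is (on expansions of trees of height at most `Δ`) a closure-basic formula
`⋀ᵢ (pᵢ(x̄) → cᵢ)` where the `pᵢ` are complete closure types, `cᵢ ∈ [0,1]`, `∧ = min` and
`→` is the Łukasiewicz implication. -/
def IsClosureBasic (e : σ) (hE : ar e = 2) (Δ : ℕ) (ψ : PLA σ ar) (xs : List ℕ) : Prop :=
  ∃ (k : ℕ) (p : Fin (k+1) → PLA σ ar) (c : Fin (k+1) → ℝ),
    (∀ i, IsCompleteClosureType e hE Δ (p i) xs ∧ c i ∈ Set.Icc (0:ℝ) 1) ∧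
    ∀ (A : Type) (_ : Fintype A) (S : Struc σ ar A), ExpandsTreeLe e hE Δ S → ∀ β : ℕ → A,
      (eval S ψ β : ℝ) =
        Finset.univ.inf' Finset.univ_nonempty
          (fun i => min 1 (1 - (eval S (p i) β : ℝ) + c i))

end Signature

end PaperTrees
/-! ### Base sequences of trees -/

namespace PaperTrees

/-- Assumption 6.4 on the base sequence of trees. -/
structure TreeSeqAssumption (V : ℕ → Type) [∀ n, Fintype (V n)]
    (En : ∀ n, V n → V n → Prop) (Δ : ℕ) (g1 g2 g3 g4 : ℕ → ℝ) : Prop where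
  delta_pos : 0 < Δ
  g1_pos : ∀ n, 0 < g1 n
  g2_pos : ∀ n, 0 < g2 n
  g3_pos : ∀ n, 0 < g3 n
  g4_pos : ∀ n, 0 < g4 n
  g1_infty : Filter.Tendsto g1 Filter.atTop Filter.atTop
  g2_infty : Filter.Tendsto g2 Filter.atTop Filter.atTop
  g3_infty : Filter.Tendsto g3 Filter.atTop Filter.atTop
  g4_infty : Filter.Tendsto g4 Filter.atTop Filter.atTop
  g3_log : ∀ α : ℝ, Filter.Tendsto (fun n => g3 n - α * Real.log n) Filter.atTop Filter.atTop
  g1_g3 : Filter.Tendsto (fun n => g1 n - g3 n) Filter.atTop Filter.atTop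
  g2_over_g1 : Filter.Tendsto (fun n => g2 n / g1 n) Filter.atTop (nhds 0)
  g4_poly : ∃ P : Polynomial ℝ, ∀ n, g4 n = P.eval (n : ℝ)
  tree : ∀ n, IsTree (En n)
  height : ∀ n, HasHeight (En n) Δ
  leaves_level : ∀ n, ∀ a : V n, IsLeaf (En n) a → Level (En n) Δ a
  child_lb : ∀ n, ∀ a : V n, ¬ IsLeaf (En n) a → g1 n ≤ (Set.ncard (childSet (En n) a) : ℝ)
  child_ub : ∀ n, ∀ a : V n, ¬ IsLeaf (En n) a → (Set.ncard (childSet (En n) a) : ℝ) ≤ g4 n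
  siblings : ∀ (B : Type) [Fintype B] (E' : B → B → Prop), IsTree E' →
      (∃ h, 1 ≤ h ∧ HasHeight E' h) →
      ∀ᶠ n in Filter.atTop, ∀ a : V n, ¬ IsRoot (En n) a → 0 < NT (En n) E' a →
        g3 n ≤ (Set.ncard {b : V n | Sibling (En n) a b ∧
          (NT (En n) E' a : ℝ) - g2 n < (NT (En n) E' b : ℝ) ∧
          (NT (En n) E' b : ℝ) < (NT (En n) E' a : ℝ) + g2 n} : ℝ)

/-- The Light Assumption on the base sequence of trees. -/
structure TreeSeqLight (V : ℕ → Type) [∀ n, Fintype (V n)]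
    (En : ∀ n, V n → V n → Prop) (Δ : ℕ) (g1 g4 : ℕ → ℝ) : Prop where
  delta_pos : 0 < Δ
  g1_pos : ∀ n, 0 < g1 n
  g4_pos : ∀ n, 0 < g4 n
  g1_infty : Filter.Tendsto g1 Filter.atTop Filter.atTop
  g4_poly : ∃ P : Polynomial ℝ, ∀ n, g4 n = P.eval (n : ℝ)
  tree : ∀ n, IsTree (En n)
  height : ∀ n, HasHeight (En n) Δ
  leaves_level : ∀ n, ∀ a : V n, IsLeaf (En n) a → Level (En n) Δ a
  child_lb : ∀ n, ∀ a : V n, ¬ IsLeaf (En n) a → g1 n ≤ (Set.ncard (childSet (En n) a) : ℝ)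
  child_ub : ∀ n, ∀ a : V n, ¬ IsLeaf (En n) a → (Set.ncard (childSet (En n) a) : ℝ) ≤ g4 n

/-! ### PLA*-networks and the induced probability distributions -/

section Net
variable {σ : Type} {ar : σ → ℕ}

/-- A `PLA*(σ)`-network based on τ = {e}: a DAG on `σ ∖ {e}` together with a formula
`θ R ∈ PLA*(par(R) ∪ {e})` (with free variables among `x₁,…,x_{ar R}`) for every
`R ∈ σ ∖ {e}`. -/
structure PLANet (σ : Type) (ar : σ → ℕ) (e : σ) where
  prec : σ → σ → Prop
  acyclic : ∀ R, ¬ Relation.TransGen prec R R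
  edges_ne : ∀ R R', prec R R' → R ≠ e ∧ R' ≠ e
  θ : σ → PLA σ ar
  symbols_ok : ∀ R, R ≠ e → symbols (θ R) ⊆ {R' | prec R' R} ∪ {e}
  fv_ok : ∀ R, R ≠ e → freeVars (θ R) ⊆ {v | v < ar R}

/-- The assignment sending variable `i < k` to `t i`. -/
def tupAssign {A : Type} (ha : Nonempty A) {k : ℕ} (t : Fin k → A) : ℕ → A :=
  fun v => if h : v < k then t ⟨v, h⟩ else ha.some

/-- The probability which the network `N` assigns to the σ-structure `S` as an expansion of
the tree `(A, E0)`: the product, over all `R ∈ σ ∖ {e}` and all tuples `ā`, of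
`S(θ_R(ā))` if `R(ā)` holds and `1 - S(θ_R(ā))` otherwise.  (Since
`θ_R ∈ PLA*(par(R) ∪ τ)`, its value in `S` coincides with its value in the reduct of `S` to
the symbols of earlier levels of the DAG, so this agrees with the level-by-level
definition of the induced distribution.) -/
def netProb [Fintype σ] [DecidableEq σ] (e : σ) (hE : ar e = 2) (N : PLANet σ ar e)
    {A : Type} [Fintype A] [DecidableEq A] (ha : Nonempty A) (E0 : A → A → Prop)
    (S : Struc σ ar A) : ℝ :=
  if IsExpansionOf e hE E0 S then
    ∏ R : σ, if R = e then 1 else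
      ∏ t : Fin (ar R) → A,
        if S R t then (eval S (N.θ R) (tupAssign ha t) : ℝ)
        else 1 - (eval S (N.θ R) (tupAssign ha t) : ℝ)
  else 0

/-- The probability of a set of σ-structures under the distribution induced by the network. -/
def netPr [Fintype σ] [DecidableEq σ] (e : σ) (hE : ar e = 2) (N : PLANet σ ar e)
    {A : Type} [Fintype A] [DecidableEq A] (ha : Nonempty A) (E0 : A → A → Prop)
    (X : Set (Struc σ ar A)) : ℝ :=
  ∑ S : Struc σ ar A, if S ∈ X then netProb e hE N ha E0 S else 0

variable [Fintype σ] [DecidableEq σ]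
variable (V : ℕ → Type) [∀ n, Fintype (V n)] [∀ n, DecidableEq (V n)]
variable (En : ∀ n, V n → V n → Prop) (hne : ∀ n, Nonempty (V n))

/-- Asymptotic equivalence of two `PLA*(σ)`-formulas with respect to the sequence of
probability distributions induced by the network on the expansions of the trees `T_n`. -/
def AsympEquiv (e : σ) (hE : ar e = 2) (N : PLANet σ ar e) (φ ψ : PLA σ ar) : Prop :=
  ∀ ε : ℝ, 0 < ε →
    Filter.Tendsto (fun n => netPr e hE N (hne n) (En n)
        {S | IsExpansionOf e hE (En n) S ∧
          ∀ β : ℕ → V n, |(eval S φ β : ℝ) - (eval S ψ β : ℝ)| ≤ ε})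
      Filter.atTop (nhds 1)

/-- `(p, ptau, q)` is `(α, ε)`-balanced in `S` (with `ys` the aggregated variables). -/
def BalancedIn {A : Type} [Fintype A] (S : Struc σ ar A) (p ptau q : PLA σ ar)
    (ys : List ℕ) (α ε : ℝ) : Prop :=
  ∀ β : ℕ → A, eval S q β = 1 →
    (α - ε) * (({b : Fin ys.length → A | eval S ptau (updMany β ys b) = 1}).ncard : ℝ) ≤
      (({b : Fin ys.length → A | eval S p (updMany β ys b) = 1 ∧
          eval S ptau (updMany β ys b) = 1}).ncard : ℝ) ∧
    (({b : Fin ys.length → A | eval S p (updMany β ys b) = 1 ∧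
        eval S ptau (updMany β ys b) = 1}).ncard : ℝ) ≤
      (α + ε) * (({b : Fin ys.length → A | eval S ptau (updMany β ys b) = 1}).ncard : ℝ)

/-- `(p, ptau, q)` is `α`-balanced with respect to the network. -/
def Balanced (e : σ) (hE : ar e = 2) (N : PLANet σ ar e) (p ptau q : PLA σ ar)
    (ys : List ℕ) (α : ℝ) : Prop :=
  ∀ ε : ℝ, 0 < ε →
    Filter.Tendsto (fun n => netPr e hE N (hne n) (En n)
        {S | IsExpansionOf e hE (En n) S ∧ BalancedIn S p ptau q ys α ε})
      Filter.atTop (nhds 1)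

/-- `p ∧ q` is cofinally satisfiable: for infinitely many `n` some expansion of `T_n`
satisfies both. -/
def CofinallySat2 (e : σ) (hE : ar e = 2) (p q : PLA σ ar) : Prop :=
  ∃ᶠ n in Filter.atTop, ∃ S : Struc σ ar (V n), IsExpansionOf e hE (En n) S ∧
    ∃ β : ℕ → V n, eval S p β = 1 ∧ eval S q β = 1

/-- The closure type `p(x̄,ȳ)` (with `x̄ = xs`, `ȳ = ys`) is ȳ-positive with respect
to the network: for every complete closure type `q(x̄)` such that `p ∧ q` is cofinally
satisfiable, the triple `(p, p↾τ, q)` is `α`-balanced for some `α > 0`. -/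
def PosType (e : σ) (hE : ar e = 2) (N : PLANet σ ar e) (Δ : ℕ)
    (p : PLA σ ar) (xs ys : List ℕ) : Prop :=
  ∀ q : PLA σ ar, IsCompleteClosureType e hE Δ q xs → CofinallySat2 V En e hE p q →
    ∃ ptau, IsTauRestriction e hE Δ p ptau (xs ++ ys) ∧
      ∃ α : ℝ, 0 < α ∧ Balanced V En hne e hE N p ptau q ys α

end Net

/-! ### Convergence testing, continuous and admissible aggregation functions -/

/-- `p` is a convergence testing sequence for parameters `c j` and `al j` (`j < k`):
lengths strictly increase, entries are nonempty sequences, and for every family of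
pairwise disjoint intervals `Iv j ⊆ [0,1]`, open in the induced topology on `[0,1]`,
with `c j ∈ Iv j`, eventually all entries lie in `⋃ j, Iv j` and the proportion of
entries in `Iv j` tends to `al j`. -/
def CTFor (p : ℕ → List unitInterval) {k : ℕ} (c : Fin k → ℝ) (al : Fin k → ℝ) : Prop :=
  (∀ n, p n ≠ []) ∧ (∀ n, (p n).length < (p (n+1)).length) ∧
  ∀ Iv : Fin k → Set ℝ,
    (∀ j, Iv j ⊆ Set.Icc (0:ℝ) 1) → (∀ j, (Iv j).OrdConnected) →
    (∀ j, ∃ U : Set ℝ, IsOpen U ∧ Iv j = U ∩ Set.Icc (0:ℝ) 1) →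
    (Pairwise fun i j => Disjoint (Iv i) (Iv j)) →
    (∀ j, c j ∈ Iv j) →
    (∀ᶠ n in Filter.atTop, ∀ x ∈ p n, (x : ℝ) ∈ ⋃ j, Iv j) ∧
    ∀ j, Filter.Tendsto
      (fun n => (((p n).filter (fun x => decide ((x:ℝ) ∈ Iv j))).length : ℝ) / ((p n).length : ℝ))
      Filter.atTop (nhds (al j))

/-- Convergence-testing sequences of `m`-tuples. -/
def CTForM {m : ℕ} (p : ℕ → Fin m → List unitInterval) (k : Fin m → ℕ)
    (c : ∀ i, Fin (k i) → ℝ) (al : ∀ i, Fin (k i) → ℝ) : Prop :=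
  ∀ i, CTFor (fun n => p n i) (c i) (al i)

/-- `F` is ct-continuous with respect to the given parameters. -/
def CTContinuousAt {m : ℕ} (F : (Fin m → List unitInterval) → unitInterval)
    (k : Fin m → ℕ) (c : ∀ i, Fin (k i) → ℝ) (al : ∀ i, Fin (k i) → ℝ) : Prop :=
  ∀ p q : ℕ → Fin m → List unitInterval, CTForM p k c al → CTForM q k c al →
    Filter.Tendsto (fun n => |(F (p n) : ℝ) - (F (q n) : ℝ)|) Filter.atTop (nhds 0)

/-- `F` is continuous (strongly admissible): ct-continuous for every choice of parameters. -/
def ContinuousAggM {m : ℕ} (F : (Fin m → List unitInterval) → unitInterval) : Prop :=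
  ∀ (k : Fin m → ℕ) (c al : ∀ i, Fin (k i) → ℝ),
    (∀ i j, c i j ∈ Set.Icc (0:ℝ) 1) → (∀ i j, al i j ∈ Set.Icc (0:ℝ) 1) →
    CTContinuousAt F k c al

/-- `F` is admissible: ct-continuous for every choice of parameters with all `al i j > 0`. -/
def AdmissibleAggM {m : ℕ} (F : (Fin m → List unitInterval) → unitInterval) : Prop :=
  ∀ (k : Fin m → ℕ) (c al : ∀ i, Fin (k i) → ℝ),
    (∀ i j, c i j ∈ Set.Icc (0:ℝ) 1) → (∀ i j, al i j ∈ Set.Icc (0:ℝ) 1) →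
    (∀ i j, 0 < al i j) → CTContinuousAt F k c al

end PaperTrees

namespace PaperTrees

/-! Let `S` be a copy of `T'` rooted at `a`, and let `p` be a deepest node of `S` having children
in `S`; these `k ≥ 1` children are leaves of `S`. Replacing them by any other `k` children of `p`
in `T_n` gives another copy of `T'` rooted at `a`, so `N(a, T') ≥ C(m, k)` where `m ≥ g₁(n)` is
the number of children of `p`. Since `k ≤ |T'| < g₁(n) ≤ m` for large `n`, `C(m, k) ≥ m ≥ g₁(n)`. -/

open Relation

theorem _root_.Nat.self_le_choose {n k : ℕ} (hk : 0 < k) (hkn : k < n) : n ≤ n.choose k := by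
  induction n generalizing k with
  | zero => omega
  | succ n ih =>
    obtain ⟨j, rfl⟩ : ∃ j, k = j + 1 := ⟨k - 1, by omega⟩
    rw [Nat.choose_succ_succ]
    rcases (by omega : j + 1 < n ∨ j + 1 = n) with hjn | rfl
    · have := ih j.succ_pos hjn
      have := Nat.choose_pos (n := n) (k := j) (by omega)
      omega
    · rw [Nat.choose_succ_self_right, Nat.choose_self]

section Trees

variable {α β γ : Type*} {E : α → α → Prop} {E' : β → β → Prop} {E'' : γ → γ → Prop}

theorem wellFounded_of_acyclic [Finite α] (h : ∀ a, ¬ TransGen E a a) : WellFounded E := by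
  have : Std.Irrefl (TransGen E) := ⟨h⟩
  exact Subrelation.wf TransGen.single (Finite.wellFounded_of_trans_of_irrefl _)

theorem RelIso'.trans (h₁ : RelIso' E E') (h₂ : RelIso' E' E'') : RelIso' E E'' := by
  obtain ⟨f, hf⟩ := h₁
  obtain ⟨g, hg⟩ := h₂
  exact ⟨f.trans g, fun x y => (hf x y).trans (hg (f x) (f y))⟩

theorem RelIso'.exists_rel (h : RelIso' E E') (h' : ∃ x y, E' x y) : ∃ x y, E x y := by
  obtain ⟨f, hf⟩ := h
  obtain ⟨x, y, hxy⟩ := h'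
  exact ⟨f.symm x, f.symm y, (hf _ _).2 (by simpa using hxy)⟩

theorem RelIso'.natCard_eq (h : RelIso' E E') : Nat.card α = Nat.card β :=
  Nat.card_congr h.choose

theorem RelIso'.isTree (h : RelIso' E E') (hE' : IsTree E') : IsTree E := by
  obtain ⟨f, hf⟩ := h
  refine ⟨fun a b hab => ?_, ?_, fun a ha => ?_, fun a hc => ?_⟩
  · have h2 := hE'.asymm _ _ ((hf a b).mp hab)
    exact ⟨fun e => h2.1 (congrArg f e), fun e => h2.2 ((hf b a).mp e)⟩
  · obtain ⟨r, hr, hu⟩ := hE'.root_unique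
    refine ⟨f.symm r, fun x hx => hr (f x) (by simpa using (hf x _).mp hx), fun y hy => ?_⟩
    rw [← hu (f y) fun x hx => hy (f.symm x) ((hf _ _).mpr (by simpa using hx)),
      Equiv.symm_apply_apply]
  · obtain ⟨b, hb, hu⟩ :=
      hE'.parent_unique (f a) fun h' => ha fun x hx => h' (f x) ((hf x a).mp hx)
    refine ⟨f.symm b, (hf _ _).mpr (by simpa using hb), fun y hy => ?_⟩
    rw [← hu (f y) ((hf y a).mp hy), Equiv.symm_apply_apply]
  · exact hE'.acyclic (f a) (TransGen.lift f (fun x y => (hf x y).mp) _ _ hc)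

theorem HasHeight.exists_rel {h : ℕ} (hE : HasHeight E h) (h1 : 1 ≤ h) : ∃ x y, E x y := by
  obtain ⟨⟨b, hb⟩, -⟩ := hE
  obtain ⟨h, rfl⟩ : ∃ h', h = h' + 1 := ⟨h - 1, by omega⟩
  obtain ⟨c, -, hcb⟩ := hb
  exact ⟨c, b, hcb⟩

namespace IsTree

theorem eq_of_rel (hE : IsTree E) {x y z : α} (hx : E x z) (hy : E y z) : x = y :=
  (hE.parent_unique z fun h => h x hx).unique hx hy

theorem rel_iff_eq (hE : IsTree E) {p x y : α} (hy : E p y) : E x y ↔ x = p :=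
  ⟨fun hxy => hE.eq_of_rel hxy hy, fun h => h ▸ hy⟩

theorem ne_of_rel (hE : IsTree E) {x y : α} (h : E x y) : y ≠ x :=
  fun h' => (hE.asymm x y h).1 h'.symm

theorem wellFounded [Finite α] (hE : IsTree E) : WellFounded E :=
  wellFounded_of_acyclic hE.acyclic

theorem wellFounded_flip [Finite α] (hE : IsTree E) : WellFounded (flip E) :=
  wellFounded_of_acyclic fun a h => hE.acyclic a (TransGen.swap _ _ h)

theorem transGen_of_isRoot [Finite α] (hE : IsTree E) {r : α} (hr : IsRoot E r) (b : α)
    (hb : b ≠ r) : TransGen E r b := by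
  induction b using hE.wellFounded.induction with
  | _ b ih =>
    obtain ⟨c, hc, -⟩ := hE.parent_unique b fun h => hb (hE.root_unique.unique h hr)
    by_cases hcr : c = r
    · exact .single (hcr ▸ hc)
    · exact .tail (ih c hc hcr) hc

end IsTree

theorem exists_mem_rel_forall_children_leaf (hwf : WellFounded (flip E)) {S : Set α}
    (h : ∃ x ∈ S, ∃ y ∈ S, E x y) :
    ∃ p ∈ S, (∃ c ∈ S, E p c) ∧ ∀ c ∈ S, E p c → ∀ z ∈ S, ¬ E c z := by
  obtain ⟨p, ⟨hp, hpc⟩, hmin⟩ := hwf.has_min {x | x ∈ S ∧ ∃ y ∈ S, E x y} h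
  exact ⟨p, hp, hpc, fun c hc hpc z hz hcz => hmin c ⟨hc, z, hz, hcz⟩ hpc⟩

namespace IsSubtreeRootedAt

variable {S : Set α} {a : α}

theorem not_rel_root (hS : IsSubtreeRootedAt E S a) {x : α} (hx : x ∈ S) : ¬ E x a :=
  hS.1.2 ⟨x, hx⟩

theorem reflTransGen [Finite α] (hS : IsSubtreeRootedAt E S a) {y : α} (hy : y ∈ S) :
    ReflTransGen E a y := by
  obtain ⟨⟨ha, hroot⟩, htree⟩ := hS
  by_cases hya : y = a
  · exact hya ▸ .refl
  · have hreach := htree.transGen_of_isRoot hroot ⟨y, hy⟩ fun h => hya (congrArg Subtype.val h)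
    exact (TransGen.lift Subtype.val (fun _ _ h => h) _ _ hreach).to_reflTransGen

theorem mem_of_rel (hE : IsTree E) (hS : IsSubtreeRootedAt E S a) {x y : α} (hy : y ∈ S)
    (hya : y ≠ a) (hxy : E x y) : x ∈ S := by
  obtain ⟨⟨ha, hroot⟩, htree⟩ := hS
  have hnr : ¬ IsRoot (InducedRel E S) ⟨y, hy⟩ := fun h =>
    hya (congrArg Subtype.val (htree.root_unique.unique h hroot))
  obtain ⟨z, hz⟩ := Classical.not_forall_not.mp hnr
  exact hE.eq_of_rel hz hxy ▸ z.2

variable {p : α}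

theorem not_rel_of_children_leaf [Finite α] (hE : IsTree E) (hS : IsSubtreeRootedAt E S a)
    (hp : p ∈ S) (hleaf : ∀ c ∈ S, E p c → ∀ z ∈ S, ¬ E c z) {x y : α} (hx : E p x)
    (hy : y ∈ S) : ¬ E x y := by
  intro hxy
  by_cases hya : y = a
  · subst hya
    exact hE.acyclic y (TransGen.tail' ((hS.reflTransGen hp).tail hx) hxy)
  · exact hleaf x (hS.mem_of_rel hE hy hya hxy) hx y hy hxy

theorem swap_children [Finite α] (hE : IsTree E) (hS : IsSubtreeRootedAt E S a) (hp : p ∈ S)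
    (hleaf : ∀ c ∈ S, E p c → ∀ z ∈ S, ¬ E c z) {K : Set α} (hK : K ⊆ childSet E p)
    (hcard : K.ncard = (S ∩ childSet E p).ncard) :
    IsSubtreeRootedAt E (S \ childSet E p ∪ K) a ∧
      RelIso' (InducedRel E (S \ childSet E p ∪ K)) (InducedRel E S) := by
  set C := childSet E p
  have : Nonempty α := ⟨a⟩
  obtain ⟨f, hf⟩ := (Set.toFinite K).exists_bijOn_of_encard_eq (t := S ∩ C) (by
    rw [← (Set.toFinite K).cast_ncard_eq, ← (Set.toFinite _).cast_ncard_eq, hcard])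
  set g := K.piecewise f id
  have hgR : ∀ x ∈ S \ C, g x = x := fun x hx =>
    Set.piecewise_eq_of_notMem _ _ _ fun hxK => hx.2 (hK hxK)
  have hgK : ∀ x ∈ K, g x ∈ S ∩ C := fun x hx => by
    rw [show g x = f x from Set.piecewise_eq_of_mem K f id hx]; exact hf.mapsTo hx
  have hbij : Set.BijOn g (S \ C ∪ K) S := by
    have hR : Set.BijOn g (S \ C) (S \ C) :=
      (Set.bijOn_id _).congr fun x hx => (hgR x hx).symm
    have hK' : Set.BijOn g K (S ∩ C) :=
      hf.congr fun x hx => (Set.piecewise_eq_of_mem K f id hx).symm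
    have hinj : Set.InjOn g (S \ C ∪ K) :=
      (Set.injOn_union (Set.disjoint_left.2 fun x hx hxK => hx.2 (hK hxK))).2
        ⟨hR.injOn, hK'.injOn, fun x hx y hy hxy => (hgR x hx ▸ hx).2 (hxy ▸ (hgK y hy).2)⟩
    simpa only [Set.sdiff_union_inter] using hR.union hK' hinj
  have hgp : ∀ x ∈ S \ C ∪ K, g x = p ↔ x = p := by
    rintro x (hx | hx)
    · rw [hgR x hx]
    · exact iff_of_false (hE.ne_of_rel (hgK x hx).2) (hE.ne_of_rel (hK hx))
  have hrel : ∀ x ∈ S \ C ∪ K, ∀ y ∈ S \ C ∪ K, E x y ↔ E (g x) (g y) := by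
    intro x hx y hy
    rcases hy with hy | hy
    · rw [hgR y hy]
      rcases hx with hx | hx
      · rw [hgR x hx]
      · exact iff_of_false (hS.not_rel_of_children_leaf hE hp hleaf (hK hx) hy.1)
          (hS.not_rel_of_children_leaf hE hp hleaf (hgK x hx).2 hy.1)
    · rw [hE.rel_iff_eq (hK hy), hE.rel_iff_eq (hgK y hy).2, hgp x hx]
  have hiso : RelIso' (InducedRel E (S \ C ∪ K)) (InducedRel E S) :=
    ⟨hbij.equiv g, fun x y => hrel x x.2 y y.2⟩
  have haR : a ∈ S \ C := ⟨hS.1.1, fun hpa => hS.not_rel_root hp hpa⟩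
  refine ⟨⟨⟨Or.inl haR, fun z hz => ?_⟩, hiso.isTree hS.2⟩, hiso⟩
  have hza := (hrel z z.2 a (Or.inl haR)).mp hz
  rw [hgR a haR] at hza
  exact hS.not_rel_root (hbij.mapsTo z.2) hza

theorem choose_le_NT [Finite α] (hE : IsTree E) (hS : IsSubtreeRootedAt E S a)
    (hSE' : RelIso' (InducedRel E S) E') (hp : p ∈ S) (hleaf : ∀ c ∈ S, E p c → ∀ z ∈ S, ¬ E c z) :
    (childSet E p).ncard.choose (S ∩ childSet E p).ncard ≤ NT E E' a := by
  set C := childSet E p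
  have hrecover : ∀ K ⊆ C, (S \ C ∪ K) ∩ C = K := fun K hK => by
    rw [Set.union_inter_distrib_right, Set.sdiff_inter_self, Set.empty_union,
      Set.inter_eq_left.2 hK]
  rw [← Set.ncard_powerset_ncard (Set.toFinite C)]
  refine Set.ncard_le_ncard_of_injOn (fun K => S \ C ∪ K) ?_ ?_
  · rintro K ⟨hKC, hK⟩
    obtain ⟨hsub, hiso⟩ := hS.swap_children hE hp hleaf hKC hK
    exact ⟨hsub, hiso.trans hSE'⟩
  · rintro K₁ ⟨hK₁, -⟩ K₂ ⟨hK₂, -⟩ h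
    rw [← hrecover K₁ hK₁, ← hrecover K₂ hK₂]
    exact congrArg (· ∩ C) h

end IsSubtreeRootedAt

end Trees

theorem statement_15_general
    (V : ℕ → Type) [∀ n, Fintype (V n)]
    (En : ∀ n, V n → V n → Prop)
    (Δ : ℕ) (g1 g2 g3 g4 : ℕ → ℝ)
    (hT : TreeSeqAssumption V En Δ g1 g2 g3 g4)
    (B : Type) [Fintype B] (E' : B → B → Prop)
    (hh : ∃ h, 1 ≤ h ∧ HasHeight E' h) :
    ∀ᶠ n in Filter.atTop, ∀ a : V n,
      0 < NT (En n) E' a → g1 n ≤ (NT (En n) E' a : ℝ) := by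
  filter_upwards [hT.g1_infty.eventually_gt_atTop (Fintype.card B : ℝ)] with n hn a hNT
  obtain ⟨S, hS, hSB⟩ := Set.nonempty_of_ncard_ne_zero hNT.ne'
  obtain ⟨h, h1, hE'⟩ := hh
  obtain ⟨x, y, hxy⟩ := hSB.exists_rel (hE'.exists_rel h1)
  obtain ⟨p, hp, ⟨c, hc, hpc⟩, hleaf⟩ :=
    exists_mem_rel_forall_children_leaf (hT.tree n).wellFounded_flip ⟨x, x.2, y, y.2, hxy⟩
  set m := (childSet (En n) p).ncard
  set k := (S ∩ childSet (En n) p).ncard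
  have hm : g1 n ≤ m := hT.child_lb n p fun h => h c hpc
  have hkB : k ≤ Fintype.card B := by
    rw [← Nat.card_eq_fintype_card, ← hSB.natCard_eq, Nat.card_coe_set_eq]
    exact Set.ncard_inter_le_ncard_left _ _
  have hk : 0 < k := (Set.ncard_pos (Set.toFinite _)).2 ⟨c, hc, hpc⟩
  have hkm : k < m := by exact_mod_cast (Nat.cast_le.2 hkB).trans_lt (hn.trans_le hm)
  calc g1 n ≤ m := hm
    _ ≤ m.choose k := by exact_mod_cast Nat.self_le_choose hk hkm
    _ ≤ NT (En n) E' a := by exact_mod_cast hS.choose_le_NT (hT.tree n) hSB hp hleaf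

/-- Remark 5.2 (ii): under Assumption 6.4 on the base sequence of trees, for every tree
`T'` of height at least 1, for all sufficiently large `n`: every `a ∈ T_n` with
`N_{T_n}(a,T') > 0` satisfies `N_{T_n}(a,T') ≥ g₁(n)`. -/
theorem statement_15
    (V : ℕ → Type) [∀ n, Fintype (V n)]
    (En : ∀ n, V n → V n → Prop)
    (Δ : ℕ) (g1 g2 g3 g4 : ℕ → ℝ)
    (hT : TreeSeqAssumption V En Δ g1 g2 g3 g4)
    (B : Type) [Fintype B] (E' : B → B → Prop) (hB : IsTree E')
    (hh : ∃ h, 1 ≤ h ∧ HasHeight E' h) :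
    ∀ᶠ n in Filter.atTop, ∀ a : V n,
      0 < NT (En n) E' a → g1 n ≤ (NT (En n) E' a : ℝ) :=
  statement_15_general V En Δ g1 g2 g3 g4 hT B E' hh
end PaperTrees
end
end

section
/- Let T be a finite tree, a ∈ T, and let T'' be a subtree of T rooted at a. Let b be a nonleaf vertex of T'' all of whose children in T'' are leaves of T'', let k be the number of children of b in T'', and let m be the number of children of b in T, with k < m. Then the number N_T(a, T'') of subtrees of T rooted at a and isomorphic to T'' satisfies N_T(a, T'') ≥ C(m, k) ≥ m, where C(m,k) is the binomial coefficient (using 1 ≤ k ≤ m − 1). -/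
open Classical Filter
noncomputable section

namespace PaperTrees

/-!
Let `C` be the `k` children of `b` in `S`; they are leaves of `S`. For every set `Y` of `k`
children of `b` in `T`, the set `(S \ C) ∪ Y` is again a subtree rooted at `a`, isomorphic to `S`
by the identity on `S \ C` and any bijection `Y ≃ C`. The only point to check is that a child of
`b` outside `S` has no child in `S`: every vertex of `S` other than `a` has its parent in `S`, and
`a` is an ancestor of `b`. Distinct `Y` give distinct subtrees, so `N_T(a, S) ≥ C(m, k) ≥ m`.
-/

section Trees

variable {A B : Type*} {E : A → A → Prop} {E' : B → B → Prop}

theorem isRoot_iff_of_equiv (f : A ≃ B) (hf : ∀ x y, E x y ↔ E' (f x) (f y)) (x : A) :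
    IsRoot E x ↔ IsRoot E' (f x) :=
  ⟨fun h w hw => h (f.symm w) ((hf _ _).mpr (by simpa using hw)),
    fun h w hw => h (f w) ((hf _ _).mp hw)⟩

theorem IsTree.of_equiv (f : A ≃ B) (hf : ∀ x y, E x y ↔ E' (f x) (f y)) (hT : IsTree E') :
    IsTree E where
  asymm x y h := by
    obtain ⟨hne, hyx⟩ := hT.asymm _ _ ((hf x y).mp h)
    exact ⟨fun e => hne (congrArg f e), fun h' => hyx ((hf y x).mp h')⟩
  root_unique := by
    obtain ⟨r, hr, hu⟩ := hT.root_unique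
    refine ⟨f.symm r, (isRoot_iff_of_equiv f hf _).mpr (by simpa using hr), fun x hx => ?_⟩
    rw [← hu (f x) ((isRoot_iff_of_equiv f hf x).mp hx), Equiv.symm_apply_apply]
  parent_unique x hx := by
    obtain ⟨p, hp, hu⟩ :=
      hT.parent_unique (f x) (fun h => hx ((isRoot_iff_of_equiv f hf x).mpr h))
    refine ⟨f.symm p, (hf _ _).mpr (by simpa using hp), fun y hy => ?_⟩
    rw [← hu (f y) ((hf _ _).mp hy), Equiv.symm_apply_apply]
  acyclic x hx := hT.acyclic (f x) (Relation.TransGen.lift f (fun _ _ => (hf _ _).mp) x x hx)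

namespace IsTree

variable (hT : IsTree E)
include hT

theorem eq_of_isRoot {x y : A} (hx : IsRoot E x) (hy : IsRoot E y) : x = y :=
  hT.root_unique.unique hx hy

theorem eq_of_rel_of_rel {x y c : A} (hx : E x c) (hy : E y c) : x = y :=
  (hT.parent_unique c fun h => h x hx).unique hx hy

theorem reflTransGen_of_isRoot [Finite A] {r : A} (hr : IsRoot E r) (z : A) :
    Relation.ReflTransGen E r z := by
  have : Std.Irrefl (Relation.TransGen E) := ⟨hT.acyclic⟩
  have hwf : WellFounded E :=
    Subrelation.wf Relation.TransGen.single (Finite.wellFounded_of_trans_of_irrefl _)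
  induction z using hwf.induction with
  | _ z ih =>
    by_cases hz : IsRoot E z
    · rw [hT.eq_of_isRoot hz hr]
    · obtain ⟨p, hp, -⟩ := hT.parent_unique z hz
      exact (ih p hp).tail hp

end IsTree

namespace IsSubtreeRootedAt

variable {S S' : Set A} {a : A} (hS : IsSubtreeRootedAt E S a)
include hS

theorem mem : a ∈ S := hS.1.1

theorem of_equiv (f : S' ≃ S) (hf : ∀ x y, InducedRel E S' x y ↔ InducedRel E S (f x) (f y))
    (ha : a ∈ S') (hfa : (f ⟨a, ha⟩ : A) = a) : IsSubtreeRootedAt E S' a := by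
  refine ⟨⟨ha, (isRoot_iff_of_equiv f hf _).mpr ?_⟩, hS.2.of_equiv f hf⟩
  obtain ⟨ha', hroot⟩ := hS.1
  rwa [show f ⟨a, ha⟩ = ⟨a, ha'⟩ from Subtype.ext hfa]

theorem reflTransGen_of_mem [Finite S] {z : A} (hz : z ∈ S) : Relation.ReflTransGen E a z := by
  simpa using (hS.2.reflTransGen_of_isRoot hS.1.2 ⟨z, hz⟩).lift Subtype.val fun _ _ h => h

theorem exists_parent_mem {z : A} (hz : z ∈ S) (hza : z ≠ a) : ∃ p ∈ S, E p z := by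
  have hnroot : ¬ IsRoot (InducedRel E S) ⟨z, hz⟩ := fun h =>
    hza (congrArg Subtype.val (hS.2.eq_of_isRoot h hS.1.2))
  obtain ⟨p, hp, -⟩ := hS.2.parent_unique _ hnroot
  exact ⟨p, p.2, hp⟩

theorem not_rel_of_not_mem [Finite S] (hT : IsTree E) {b y z : A} (hb : b ∈ S) (hby : E b y)
    (hy : y ∉ S) (hz : z ∈ S) : ¬ E y z := by
  intro hyz
  by_cases hza : z = a
  · subst hza
    exact hT.acyclic z (Relation.TransGen.tail' (hS.reflTransGen_of_mem hb) hby |>.tail hyz)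
  · obtain ⟨p, hp, hpz⟩ := hS.exists_parent_mem hz hza
    exact hy (hT.eq_of_rel_of_rel hpz hyz ▸ hp)

end IsSubtreeRootedAt

end Trees

section Swap

variable {A : Type*} {E : A → A → Prop} {S C Y : Set A}

def swapEquiv (hCS : C ⊆ S) (hYS : Disjoint (S \ C) Y) (e : Y ≃ C) : ↥(S \ C ∪ Y) ≃ S :=
  (Equiv.Set.union hYS).trans <| (Equiv.sumCongr (Equiv.refl _) e).trans <|
    (Equiv.Set.union disjoint_sdiff_self_left).symm.trans
      (Equiv.setCongr (Set.sdiff_union_of_subset hCS))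

variable (hCS : C ⊆ S) (hYS : Disjoint (S \ C) Y) (e : Y ≃ C)

theorem swapEquiv_apply_of_mem_sdiff (x : ↥(S \ C ∪ Y)) (hx : (x : A) ∈ S \ C) :
    (swapEquiv hCS hYS e x : A) = x := by
  simp [swapEquiv, Equiv.Set.union_apply_left hYS hx, Equiv.Set.union_symm_apply_left]

theorem swapEquiv_apply_of_mem_right (x : ↥(S \ C ∪ Y)) (hx : (x : A) ∈ Y) :
    (swapEquiv hCS hYS e x : A) = e ⟨x, hx⟩ := by
  simp [swapEquiv, Equiv.Set.union_apply_right hYS hx, Equiv.Set.union_symm_apply_right]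

variable {a b : A} [Finite S] (hT : IsTree E) (hS : IsSubtreeRootedAt E S a) (hb : b ∈ S)
  (hCb : ∀ x ∈ C, E b x) (hCleaf : ∀ x ∈ C, ∀ y ∈ S, ¬ E x y) (hYb : ∀ y ∈ Y, E b y)
include hCS hYS e hT hS hb hCb hCleaf hYb

theorem swapEquiv_rel_iff (x y : ↥(S \ C ∪ Y)) :
    InducedRel E _ x y ↔ InducedRel E S (swapEquiv hCS hYS e x) (swapEquiv hCS hYS e y) := by
  have hC (z : ↥(S \ C ∪ Y)) (hz : (z : A) ∈ Y) : (swapEquiv hCS hYS e z : A) ∈ C := by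
    rw [swapEquiv_apply_of_mem_right hCS hYS e z hz]
    exact (e _).2
  have hYleaf (z : ↥(S \ C ∪ Y)) (hz : (z : A) ∈ Y) (w : A) (hw : w ∈ S) : ¬ E z w := by
    by_cases hzS : (z : A) ∈ S
    · exact hCleaf z (by_contra fun h => hYS.ne_of_mem ⟨hzS, h⟩ hz rfl) w hw
    · exact hS.not_rel_of_not_mem hT hb (hYb z hz) hzS hw
  simp only [InducedRel]
  rcases x.2 with hx | hx <;> rcases y.2 with hy | hy
  · rw [swapEquiv_apply_of_mem_sdiff hCS hYS e x hx, swapEquiv_apply_of_mem_sdiff hCS hYS e y hy]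
  · rw [swapEquiv_apply_of_mem_sdiff hCS hYS e x hx]
    constructor <;> intro hxy
    · exact hT.eq_of_rel_of_rel hxy (hYb y hy) ▸ hCb _ (hC y hy)
    · exact hT.eq_of_rel_of_rel hxy (hCb _ (hC y hy)) ▸ hYb y hy
  · rw [swapEquiv_apply_of_mem_sdiff hCS hYS e y hy]
    exact iff_of_false (hYleaf x hx y hy.1) (hCleaf _ (hC x hx) y hy.1)
  · refine iff_of_false (fun hxy => ?_) (hCleaf _ (hC x hx) _ (hCS (hC y hy)))
    have hbb := hT.eq_of_rel_of_rel hxy (hYb y hy) ▸ hYb x hx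
    exact (hT.asymm b b hbb).1 rfl

theorem isSubtreeRootedAt_sdiff_union :
    IsSubtreeRootedAt E (S \ C ∪ Y) a ∧ RelIso' (InducedRel E (S \ C ∪ Y)) (InducedRel E S) := by
  have haC : a ∉ C := fun h => hS.1.2 ⟨b, hb⟩ (hCb a h)
  have ha : a ∈ S \ C ∪ Y := Or.inl ⟨hS.mem, haC⟩
  have hiso := swapEquiv_rel_iff hCS hYS e hT hS hb hCb hCleaf hYb
  exact ⟨hS.of_equiv _ hiso ha (swapEquiv_apply_of_mem_sdiff hCS hYS e _ ⟨hS.mem, haC⟩), _, hiso⟩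

end Swap

theorem choose_ncard_le_NT {A : Type*} [Finite A] {E : A → A → Prop} {S : Set A} {a b : A}
    (hT : IsTree E) (hS : IsSubtreeRootedAt E S a) (hb : b ∈ S)
    (hleaf : ∀ x ∈ S, E b x → ∀ y ∈ S, ¬ E x y) :
    (childSet E b).ncard.choose {x | x ∈ S ∧ E b x}.ncard ≤ NT E (InducedRel E S) a := by
  set C := {x | x ∈ S ∧ E b x}
  set P := (Set.toFinite (childSet E b)).toFinset.powersetCard C.ncard
  have hchild {Y : Finset A} (hY : Y ∈ P) (y : A) (hy : y ∈ (Y : Set A)) : E b y := by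
    simpa [childSet] using (Finset.mem_powersetCard.mp hY).1 hy
  have hdisj {Y : Finset A} (hY : Y ∈ P) : Disjoint (S \ C) Y :=
    Set.disjoint_left.mpr fun y hy hyY => hy.2 ⟨hy.1, hchild hY y hyY⟩
  have hcopy : (fun Y : Finset A => S \ C ∪ Y) '' P ⊆
      {S' | IsSubtreeRootedAt E S' a ∧ RelIso' (InducedRel E S') (InducedRel E S)} := by
    rintro _ ⟨Y, hY, rfl⟩
    have hcard : Nat.card (Y : Set A) = Nat.card C := by
      simp [(Finset.mem_powersetCard.mp hY).2]
    obtain ⟨e⟩ := Finite.card_eq.mp hcard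
    exact isSubtreeRootedAt_sdiff_union (fun _ hx => hx.1) (hdisj hY) e hT hS hb
      (fun _ hx => hx.2) (fun x hx => hleaf x hx.1 hx.2) (hchild hY)
  have hinj : Set.InjOn (fun Y : Finset A => S \ C ∪ Y) P := fun Y hY Y' hY' h => by
    have := congrArg (· \ (S \ C)) h
    simp only [Set.union_sdiff_cancel_left (Set.disjoint_iff.mp (hdisj hY)),
      Set.union_sdiff_cancel_left (Set.disjoint_iff.mp (hdisj hY'))] at this
    exact_mod_cast this
  calc (childSet E b).ncard.choose C.ncard = P.card := by
        rw [Finset.card_powersetCard, Set.ncard_eq_toFinset_card]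
    _ = ((fun Y : Finset A => S \ C ∪ Y) '' P).ncard := by
        rw [hinj.ncard_image, Set.ncard_coe_finset]
    _ ≤ NT E (InducedRel E S) a := Set.ncard_le_ncard hcopy (Set.toFinite _)

theorem self_le_choose {m k : ℕ} (hk : 0 < k) (hkm : k < m) : m ≤ m.choose k := by
  induction m generalizing k with
  | zero => omega
  | succ n ih =>
    obtain ⟨j, rfl⟩ := Nat.exists_eq_add_of_lt hk
    rw [zero_add, Nat.choose_succ_succ']
    rcases j.eq_zero_or_pos with rfl | hj
    · simp
    rcases (by omega : j + 1 < n ∨ j + 1 = n) with hlt | rfl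
    · have := ih (by omega) hlt
      have := Nat.choose_pos (by omega : j ≤ n)
      omega
    · simp [Nat.choose_succ_self_right]

theorem statement_16_general
    {A : Type} [Fintype A] (E : A → A → Prop) (hT : IsTree E)
    (a : A) (S0 : Set A) (hS : IsSubtreeRootedAt E S0 a)
    (b : A) (hb : b ∈ S0)
    (hchildleaves : ∀ x ∈ S0, E b x → ∀ y ∈ S0, ¬ E x y)
    (k m : ℕ)
    (hk : k = Set.ncard {x | x ∈ S0 ∧ E b x})
    (hm : m = Set.ncard {x | E b x})
    (hk1 : 1 ≤ k) (hkm : k < m) :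
    m.choose k ≤ NT E (InducedRel E S0) a ∧ m ≤ m.choose k := by
  subst hk hm
  exact ⟨choose_ncard_le_NT hT hS hb hchildleaves, self_le_choose hk1 hkm⟩

/-- The combinatorial estimate from Remark 5.2 (ii): if `T''` (carried by the subset `S₀`)
is a subtree of the finite tree `T = (A, E)` rooted at `a`, `b` is a nonleaf of `T''` all
of whose children in `T''` are leaves of `T''`, `k` is the number of children of `b` in
`T''` and `m` the number of children of `b` in `T`, with `1 ≤ k < m`, then
`N_T(a, T'') ≥ C(m,k) ≥ m`. -/
theorem statement_16
    {A : Type} [Fintype A] (E : A → A → Prop) (hT : IsTree E)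
    (a : A) (S0 : Set A) (hS : IsSubtreeRootedAt E S0 a)
    (b : A) (hb : b ∈ S0)
    (hnonleaf : ∃ x ∈ S0, E b x)
    (hchildleaves : ∀ x ∈ S0, E b x → ∀ y ∈ S0, ¬ E x y)
    (k m : ℕ)
    (hk : k = Set.ncard {x | x ∈ S0 ∧ E b x})
    (hm : m = Set.ncard {x | E b x})
    (hk1 : 1 ≤ k) (hkm : k < m) :
    m.choose k ≤ NT E (InducedRel E S0) a ∧ m ≤ m.choose k :=
  statement_16_general E hT a S0 hS b hb hchildleaves k m hk hm hk1 hkm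

end PaperTrees
end
end
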